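/- arXiv:1708.07300 — 4 statements merged into one kernel-verified Lean document; each statement's English description precedes it below -/
import Mathlib

section
/- Let X be a real Banach space, V a linear subspace of X, and x an element of X with ‖x‖ = 1. Then the following are equivalent: (1) for every v ∈ V the equality ‖v + x‖ = 1 + ‖v‖ holds; (2) for every continuous linear functional v* : V → ℝ there exists a continuous linear functional x* : X → ℝ extending v* such that ‖x*‖ = ‖v*‖ and x*(x) = ‖v*‖. -/
/-!
By homogeneity, `‖v + x‖ = 1 + ‖v‖` on `V` upgrades to `‖v + t • x‖ = ‖v‖ + |t|`, so
`v + t • x ↦ f v + t ‖f‖` is a functional on `V ⊔ ℝ ∙ x` of norm `‖f‖`; Hahn–Banach extends it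
without increasing the norm. Conversely, extending a norming functional of `v` in this way gives
`xs (v + x) = ‖v‖ + 1` with `‖xs‖ = 1`, which is the reverse of the triangle inequality.
-/

open scoped NNReal

theorem ContinuousLinearMap.norm_le_of_forall_apply_eq {𝕜 E F : Type*} [NontriviallyNormedField 𝕜]
    [SeminormedAddCommGroup E] [NormedSpace 𝕜 E] [SeminormedAddCommGroup F] [NormedSpace 𝕜 F]
    {V : Submodule 𝕜 E} {g : E →L[𝕜] F} {f : V →L[𝕜] F} (h : ∀ v : V, g v = f v) : ‖f‖ ≤ ‖g‖ :=
  f.opNorm_le_bound (norm_nonneg g) fun v ↦ h v ▸ g.le_opNorm v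

section

variable {X : Type*} [NormedAddCommGroup X] [NormedSpace ℝ X] {V : Submodule ℝ X} {x : X}

theorem norm_add_smul_eq_of_forall_norm_add_eq (h : ∀ v ∈ V, ‖v + x‖ = 1 + ‖v‖) {v : X}
    (hv : v ∈ V) (t : ℝ) : ‖v + t • x‖ = ‖v‖ + |t| := by
  rcases eq_or_ne t 0 with rfl | ht
  · simp
  calc ‖v + t • x‖ = ‖t • (t⁻¹ • v + x)‖ := by rw [smul_add, smul_inv_smul₀ ht]
    _ = |t| * (1 + ‖t⁻¹ • v‖) := by rw [norm_smul, h _ (V.smul_mem _ hv), Real.norm_eq_abs]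
    _ = ‖v‖ + |t| := by
      rw [norm_smul, norm_inv, Real.norm_eq_abs, mul_add, ← mul_assoc,
        mul_inv_cancel₀ (abs_ne_zero.mpr ht)]
      ring

theorem notMem_of_forall_norm_add_eq (h : ∀ v ∈ V, ‖v + x‖ = 1 + ‖v‖) : x ∉ V := fun hxV ↦ by
  have := h (-x) (V.neg_mem hxV)
  rw [neg_add_cancel, norm_zero, norm_neg] at this
  linarith [norm_nonneg x]

theorem exists_extension_of_le_on_sup_span (hx : x ∉ V) (f : Module.Dual ℝ V) (c : ℝ) {M : ℝ≥0}
    (hf : ∀ (v : V) (t : ℝ), f v + t * c ≤ M * ‖(v : X) + t • x‖) :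
    ∃ g : StrongDual ℝ X, (∀ v : V, g v = f v) ∧ g x = c ∧ ‖g‖ ≤ M := by
  set F := LinearPMap.supSpanSingleton ⟨V, f⟩ x c hx
  have hF : ∀ y : F.domain, F y ≤ M • normSeminorm ℝ X y := by
    rintro ⟨y, hy⟩
    obtain ⟨v, hv, _, hz, rfl⟩ := Submodule.mem_sup.1 hy
    obtain ⟨t, rfl⟩ := Submodule.mem_span_singleton.1 hz
    simp only [F, LinearPMap.supSpanSingleton_apply_mk ⟨V, f⟩ x c hx v hv t]
    simpa [NNReal.smul_def, mul_comm t c] using hf ⟨v, hv⟩ t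
  obtain ⟨g, hgF, hg⟩ := Module.Dual.exists_continuous_extension_of_le_seminorm_real
    F.domain F.toFun (p := M • normSeminorm ℝ X) (continuous_norm.const_smul _) hF
  refine ⟨g, fun v ↦ ?_, ?_, g.opNorm_le_bound M.2 fun y ↦ by simpa [NNReal.smul_def] using hg y⟩
  · rw [hgF ⟨v, Submodule.mem_sup_left v.2⟩, LinearPMap.toFun_eq_coe,
      LinearPMap.supSpanSingleton_apply_mk_of_mem _ _ hx v.2]
    rfl
  · rw [hgF ⟨x, Submodule.mem_sup_right (Submodule.mem_span_singleton_self x)⟩,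
      LinearPMap.toFun_eq_coe, LinearPMap.supSpanSingleton_apply_self]

theorem exists_norming_extension_of_forall_norm_add_eq (h : ∀ v ∈ V, ‖v + x‖ = 1 + ‖v‖)
    (f : StrongDual ℝ V) : ∃ g : StrongDual ℝ X, (∀ v : V, g v = f v) ∧ ‖g‖ = ‖f‖ ∧ g x = ‖f‖ := by
  have hbound (v : V) (t : ℝ) : f v + t * ‖f‖ ≤ (‖f‖₊ : ℝ) * ‖(v : X) + t • x‖ := by
    rw [coe_nnnorm, norm_add_smul_eq_of_forall_norm_add_eq h v.2, mul_add]
    have hv : f v ≤ ‖f‖ * ‖v‖ := (le_abs_self _).trans (f.le_opNorm v)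
    have ht : t * ‖f‖ ≤ ‖f‖ * |t| := by
      rw [mul_comm]
      exact mul_le_mul_of_nonneg_left (le_abs_self t) (norm_nonneg f)
    exact add_le_add hv ht
  obtain ⟨g, hgf, hgx, hg⟩ := exists_extension_of_le_on_sup_span
    (notMem_of_forall_norm_add_eq h) f.toLinearMap ‖f‖ hbound
  exact ⟨g, hgf, le_antisymm hg (ContinuousLinearMap.norm_le_of_forall_apply_eq hgf), hgx⟩

theorem norm_add_eq_of_forall_exists_norming_extension (hx : ‖x‖ = 1)
    (h : ∀ f : StrongDual ℝ V, ∃ g : StrongDual ℝ X,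
      (∀ v : V, g v = f v) ∧ ‖g‖ = ‖f‖ ∧ g x = ‖f‖) {v : X} (hv : v ∈ V) :
    ‖v + x‖ = 1 + ‖v‖ := by
  rcases eq_or_ne v 0 with rfl | hv0
  · simp [hx]
  obtain ⟨f, hf, hfv⟩ := exists_dual_vector ℝ (⟨v, hv⟩ : V) (by simpa using hv0)
  obtain ⟨g, hgf, hg, hgx⟩ := h f
  refine le_antisymm (by linarith [norm_add_le v x]) ?_
  calc 1 + ‖v‖ = g (v + x) := by
        rw [map_add, hgf ⟨v, hv⟩, hfv, hgx, hf]; simp [add_comm]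
    _ ≤ ‖g‖ * ‖v + x‖ := (le_abs_self _).trans (g.le_opNorm _)
    _ = ‖v + x‖ := by rw [hg, hf, one_mul]

end

theorem stmt_0_general (X : Type*) [NormedAddCommGroup X] [NormedSpace ℝ X]
    (V : Submodule ℝ X) (x : X) (hx : ‖x‖ = 1) :
    (∀ v ∈ V, ‖v + x‖ = 1 + ‖v‖) ↔
      (∀ vs : V →L[ℝ] ℝ, ∃ xs : X →L[ℝ] ℝ,
        (∀ v : V, xs v = vs v) ∧ ‖xs‖ = ‖vs‖ ∧ xs x = ‖vs‖) :=
  ⟨exists_norming_extension_of_forall_norm_add_eq, fun h _ ↦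
    norm_add_eq_of_forall_exists_norming_extension hx h⟩

/-- Characterisation of ℓ₁-orthogonality via norm-attaining extensions
of functionals. -/
theorem stmt_0 (X : Type*) [NormedAddCommGroup X] [NormedSpace ℝ X] [CompleteSpace X]
    (V : Submodule ℝ X) (x : X) (hx : ‖x‖ = 1) :
    (∀ v ∈ V, ‖v + x‖ = 1 + ‖v‖) ↔
      (∀ vs : V →L[ℝ] ℝ, ∃ xs : X →L[ℝ] ℝ,
        (∀ v : V, xs v = vs v) ∧ ‖xs‖ = ‖vs‖ ∧ xs x = ‖vs‖) :=
  stmt_0_general X V x hx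
end

section
/- Let X be a separable real Banach space and let V be a norming subset of the unit sphere S_X, i.e. ‖x*‖ = sup_{x ∈ V} x*(x) for every x* ∈ X*. Then the following are equivalent: (1) there exists a sequence {v_n} in V such that every weak-star cluster point v of {v_n} in the bidual ball B_{X**} (with respect to the topology σ(X**, X*), viewing the v_n in X** via the canonical embedding) satisfies ‖x + v‖ = ‖x‖ + 1 for every x ∈ X; (2) X has an octahedral norm; (3) whenever V ⊆ ⋃_{i=1}^n B(x_i, r_i) for finitely many points x_i ∈ B_X and radii r_i > 0, there exists i ∈ {1,…,n} such that B_X ⊆ B(x_i, r_i). -/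
open Filter Topology Metric

/-- A Banach space has an octahedral norm if for every finite-dimensional subspace `E`
and every `ε > 0` there is a norm-one vector `x` with
`‖e + λ x‖ ≥ (1-ε)(‖e‖ + |λ|)` for all `e ∈ E`, `λ ∈ ℝ`. -/
def OctahedralNorm (X : Type*) [NormedAddCommGroup X] [NormedSpace ℝ X] : Prop :=
  ∀ E : Submodule ℝ X, FiniteDimensional ℝ E → ∀ ε : ℝ, 0 < ε →
    ∃ x : X, ‖x‖ = 1 ∧ ∀ e ∈ E, ∀ l : ℝ, (1 - ε) * (‖e‖ + |l|) ≤ ‖e + l • x‖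

/-!
All three conditions are equivalent to one property of `V`, `AlmostNormAdditive V`: for every
finite `F ⊆ X` and `δ > 0` some `v ∈ V` has `‖e + v‖ ≥ ‖e‖ + 1 - δ` for all `e ∈ F`.

Octahedrality follows from it by compactness of the unit sphere of `E` together with
`‖a x + b y‖ ≥ (1 - δ)(a + b)` whenever `‖x‖, ‖y‖ ≤ 1` and `‖x + y‖ ≥ 2 - δ`. Conversely, given an
octahedral vector `z` for `F`, let `f_e` norm `e + z`; an element of `V` almost norming `∑ f_e`
must nearly attain every `f_e z`, so it can replace `z`.

Since `B_X ⊄ B(c, r)` iff `r < 1 + ‖c‖`, a point of `V` outside the balls `B(-e, 1 + ‖e‖ - δ)`,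
`e ∈ F`, is exactly a witness of almost additivity; scaling `F` into `B_X` makes these balls
admissible in the ball condition.

If `u` is a weak* cluster point with `‖x + u‖ = ‖x‖ + 1`, functionals almost norming the `e + u`
give a weak* neighbourhood of `u` that some `v_n` enters. Conversely, choose the `v_n`
recursively so that along a dense sequence `(d_k)` the sums `d_k + v_i + ⋯ + v_{i+m-1}` (`k ≤ i`)
have norm at least `‖d_k‖ + m - 2^{-i}`. Weak* cluster points of their norming functionals are
`g ∈ B_{X*}` with `g d_k ≈ ‖d_k‖` and `g v_n ≈ 1` for all `n ≥ i`, and evaluating `x + u` at `g`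
forces `‖x + u‖ ≥ ‖x‖ + 1`.
-/

theorem exists_seq_forall_of_eqOn_prefix {α : Type*} [Nonempty α]
    (P : ℕ → (ℕ → α) → α → Prop)
    (hP : ∀ n w w', Set.EqOn w w' (Set.Iio n) → ∀ a, P n w a → P n w' a)
    (h : ∀ n w, ∃ a, P n w a) : ∃ v : ℕ → α, ∀ n, P n v (v n) := by
  choose pick hpick using h
  let W : ℕ → ℕ → α := fun n =>
    Nat.rec (fun _ => Classical.arbitrary α) (fun n w => Function.update w n (pick n w)) n
  have hW : ∀ n j, j < n → W n j = W (j + 1) j := by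
    intro n
    induction n with
    | zero => intro j hj; omega
    | succ n ih =>
      intro j hj
      rcases Nat.lt_succ_iff_lt_or_eq.1 hj with hj | rfl
      · exact (Function.update_of_ne hj.ne _ _).trans (ih j hj)
      · rfl
  refine ⟨fun n => W (n + 1) n, fun n => ?_⟩
  have hWn : W (n + 1) n = pick n (W n) := Function.update_self _ _ _
  show P n _ (W (n + 1) n)
  rw [hWn]
  exact hP n (W n) _ (fun j hj => hW n j hj) _ (hpick n (W n))

section NormedSpace

variable {E : Type*} [NormedAddCommGroup E] [NormedSpace ℝ E]

theorem abs_apply_le_norm_of_norm_le_one {f : StrongDual ℝ E} (hf : ‖f‖ ≤ 1) (x : E) :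
    |f x| ≤ ‖x‖ := by
  simpa using f.le_of_opNorm_le hf x

theorem exists_norm_le_one_lt_apply (w : StrongDual ℝ E) {r : ℝ} (hr : r < ‖w‖) :
    ∃ x : E, ‖x‖ ≤ 1 ∧ r < w x := by
  obtain ⟨x, hx, hrx⟩ := w.exists_lt_apply_of_lt_opNorm hr
  rcases le_or_gt 0 (w x) with h | h
  · exact ⟨x, hx.le, by rwa [Real.norm_eq_abs, abs_of_nonneg h] at hrx⟩
  · refine ⟨-x, by simpa using hx.le, ?_⟩
    rwa [map_neg, ← abs_of_neg h, ← Real.norm_eq_abs]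

theorem exists_mapClusterPt_toWeakDual {ι : Type*} {l : Filter ι} [l.NeBot]
    (s : ι → StrongDual ℝ E) (hs : ∀ i, ‖s i‖ ≤ 1) :
    ∃ g : StrongDual ℝ E, ‖g‖ ≤ 1 ∧
      MapClusterPt (StrongDual.toWeakDual g) l fun i => StrongDual.toWeakDual (s i) := by
  obtain ⟨g, hg, hcl⟩ := (WeakDual.isCompact_closedBall (𝕜 := ℝ) (E := E) 0 1).exists_mapClusterPt
    (f := l) (u := fun i => StrongDual.toWeakDual (s i))
    (tendsto_principal.2 (Eventually.of_forall fun i => by simpa using hs i))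
  exact ⟨WeakDual.toStrongDual g, by simpa using hg, hcl⟩

theorem le_norm_smul_add_smul {x y : E} {δ a b : ℝ} (hδ : 0 ≤ δ) (hx : ‖x‖ ≤ 1) (hy : ‖y‖ ≤ 1)
    (hxy : 2 - δ ≤ ‖x + y‖) (ha : 0 ≤ a) (hb : 0 ≤ b) :
    (1 - δ) * (a + b) ≤ ‖a • x + b • y‖ := by
  wlog hba : b ≤ a generalizing x y a b
  · have := this hy hx (by rwa [add_comm]) hb ha (le_of_not_ge hba)
    rwa [add_comm b, add_comm (b • y)] at this
  have h1 := mul_le_mul_of_nonneg_left hxy ha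
  have h2 := mul_le_mul_of_nonneg_left hy (sub_nonneg.2 hba)
  calc (1 - δ) * (a + b) ≤ a * ‖x + y‖ - (a - b) * ‖y‖ := by nlinarith [mul_nonneg hδ hb]
    _ = ‖a • (x + y)‖ - ‖(a - b) • y‖ := by
      rw [norm_smul, norm_smul, Real.norm_of_nonneg ha, Real.norm_of_nonneg (sub_nonneg.2 hba)]
    _ ≤ ‖a • (x + y) - (a - b) • y‖ := norm_sub_norm_le _ _
    _ = ‖a • x + b • y‖ := by congr 1; module

theorem le_norm_add_of_le_norm_smul_add {e v : E} {t δ : ℝ} (ht : 0 < t) (ht1 : t ≤ 1)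
    (hv : ‖v‖ ≤ 1) (h : ‖t • e‖ + 1 - t * δ ≤ ‖t • e + v‖) : ‖e‖ + 1 - δ ≤ ‖e + v‖ := by
  rw [norm_smul, Real.norm_of_nonneg ht.le] at h
  have hsmul : ‖(1 - t) • v‖ ≤ 1 - t := by
    rw [norm_smul, Real.norm_of_nonneg (sub_nonneg.2 ht1)]
    exact mul_le_of_le_one_right (sub_nonneg.2 ht1) hv
  refine le_of_mul_le_mul_left ?_ ht
  calc t * (‖e‖ + 1 - δ) ≤ ‖t • e + v‖ - ‖(1 - t) • v‖ := by linarith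
    _ ≤ ‖t • e + v - (1 - t) • v‖ := norm_sub_norm_le _ _
    _ = t * ‖e + v‖ := by
      rw [show t • e + v - (1 - t) • v = t • (e + v) by module, norm_smul,
        Real.norm_of_nonneg ht.le]

theorem closedBall_zero_one_not_subset [Nontrivial E] {c : E} {r : ℝ} (hr : r < 1 + ‖c‖) :
    ¬ closedBall (0 : E) 1 ⊆ closedBall c r := by
  intro hsub
  obtain ⟨y, hy, hyc⟩ : ∃ y : E, ‖y‖ ≤ 1 ∧ ‖y - c‖ = 1 + ‖c‖ := by
    rcases eq_or_ne c 0 with rfl | hc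
    · obtain ⟨y, hy⟩ := exists_norm_eq E zero_le_one
      exact ⟨y, hy.le, by simp [hy]⟩
    · refine ⟨-(‖c‖⁻¹ • c), by simp [norm_smul, hc], ?_⟩
      rw [show -(‖c‖⁻¹ • c) - c = -((‖c‖⁻¹ + 1) • c) by module, norm_neg, norm_smul,
        Real.norm_of_nonneg (by positivity), add_mul, inv_mul_cancel₀ (norm_ne_zero_iff.2 hc),
        one_mul]
  have := hsub (mem_closedBall_zero_iff.2 hy)
  rw [mem_closedBall, dist_eq_norm, hyc] at this
  linarith

end NormedSpace

section Octahedral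

variable {X : Type*} [NormedAddCommGroup X]

def AlmostNormAdditive (V : Set X) : Prop :=
  ∀ (F : Finset X) (δ : ℝ), 0 < δ → ∃ v ∈ V, ∀ e ∈ F, ‖e‖ + 1 - δ ≤ ‖e + v‖

namespace AlmostNormAdditive

variable {V W : Set X}

theorem mono (hV : AlmostNormAdditive V) (hVW : V ⊆ W) : AlmostNormAdditive W := fun F δ hδ =>
  let ⟨v, hv, h⟩ := hV F δ hδ
  ⟨v, hVW hv, h⟩

theorem nontrivial (hV : AlmostNormAdditive V) : Nontrivial X := by
  obtain ⟨v, -, hv⟩ := hV {0} (1 / 2) one_half_pos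
  have := hv 0 (Finset.mem_singleton_self 0)
  refine nontrivial_of_ne v 0 fun h => ?_
  simp only [h, norm_zero, add_zero] at this
  linarith

theorem exists_forall_of_isCompact (hV : AlmostNormAdditive V) {K : Set X} (hK : IsCompact K)
    {δ : ℝ} (hδ : 0 < δ) : ∃ v ∈ V, ∀ e ∈ K, ‖e‖ + 1 - δ ≤ ‖e + v‖ := by
  obtain ⟨t, -, ht, hKt⟩ := finite_cover_balls_of_compact hK (show 0 < δ / 4 by positivity)
  obtain ⟨v, hvV, hv⟩ := hV ht.toFinset (δ / 2) (by positivity)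
  refine ⟨v, hvV, fun e he => ?_⟩
  obtain ⟨y, hyt, hey⟩ := Set.mem_iUnion₂.1 (hKt he)
  have hy := hv y (ht.mem_toFinset.2 hyt)
  rw [mem_ball, dist_eq_norm] at hey
  have h1 := norm_sub_norm_le e y
  have h2 := norm_sub_norm_le (y + v) (e + v)
  rw [show y + v - (e + v) = -(e - y) by abel, norm_neg] at h2
  linarith

theorem exists_closedBall_subset (hV : AlmostNormAdditive V) {ι : Type*} [Finite ι]
    (c : ι → X) (r : ι → ℝ) (hcover : V ⊆ ⋃ i, closedBall (c i) (r i)) :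
    ∃ i, closedBall (0 : X) 1 ⊆ closedBall (c i) (r i) := by
  classical
  by_contra! hno
  have hgap : ∀ i, r i < 1 + ‖c i‖ := by
    intro i
    obtain ⟨y, hy, hyc⟩ := Set.not_subset.1 (hno i)
    rw [mem_closedBall_zero_iff] at hy
    rw [mem_closedBall, dist_eq_norm, not_le] at hyc
    linarith [norm_sub_le y (c i)]
  obtain ⟨δ, hδ, hδle⟩ : ∃ δ > 0, ∀ i, δ ≤ 1 + ‖c i‖ - r i := by
    rcases isEmpty_or_nonempty ι with hι | hι
    · exact ⟨1, one_pos, fun i => isEmptyElim i⟩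
    · obtain ⟨i₀, hi₀⟩ := Finite.exists_min fun i => 1 + ‖c i‖ - r i
      exact ⟨_, by linarith [hgap i₀], hi₀⟩
  have := Fintype.ofFinite ι
  obtain ⟨v, hvV, hv⟩ := hV (Finset.univ.image fun i => -c i) (δ / 2) (half_pos hδ)
  obtain ⟨i, hi⟩ := Set.mem_iUnion.1 (hcover hvV)
  have := hv (-c i) (Finset.mem_image_of_mem _ (Finset.mem_univ i))
  rw [norm_neg, neg_add_eq_sub] at this
  rw [mem_closedBall, dist_eq_norm] at hi
  linarith [hδle i]

theorem exists_seq_norm_add_sum_ge (hV : AlmostNormAdditive V) (d : ℕ → X) :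
    ∃ v : ℕ → X, (∀ n, v n ∈ V) ∧ ∀ k i m : ℕ, k ≤ i →
      ‖d k‖ + m - (1 / 2) ^ i ≤ ‖d k + ∑ j ∈ Finset.Ico i (i + m), v j‖ := by
  classical
  let F : ℕ → (ℕ → X) → Finset X := fun n w =>
    (Finset.range (n + 1) ×ˢ Finset.range (n + 1)).image
      fun p => d p.1 + ∑ j ∈ Finset.Ico p.2 n, w j
  obtain ⟨v, hv⟩ := exists_seq_forall_of_eqOn_prefix
    (fun n w a => a ∈ V ∧ ∀ e ∈ F n w, ‖e‖ + 1 - (1 / 2) ^ (n + 1) ≤ ‖e + a‖)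
    (fun n w w' hw a ha => by
      have hF : F n w = F n w' := Finset.image_congr fun p _ => by
        congr 1
        exact Finset.sum_congr rfl fun j hj => hw (Finset.mem_Ico.1 hj).2
      exact hF ▸ ha)
    (fun n w => hV (F n w) _ (by positivity))
  refine ⟨v, fun n => (hv n).1, fun k i m hki => ?_⟩
  suffices ‖d k‖ + m - (1 / 2) ^ i + (1 / 2) ^ (i + m) ≤
      ‖d k + ∑ j ∈ Finset.Ico i (i + m), v j‖ by
    linarith [pow_pos (one_half_pos (α := ℝ)) (i + m)]
  induction m with
  | zero => simp
  | succ m ih =>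
    have hmem : d k + ∑ j ∈ Finset.Ico i (i + m), v j ∈ F (i + m) v :=
      Finset.mem_image.2 ⟨(k, i), by simp only [Finset.mem_product, Finset.mem_range]; omega, rfl⟩
    have hstep := (hv (i + m)).2 _ hmem
    rw [pow_succ] at hstep
    rw [← add_assoc, Finset.sum_Ico_succ_top (by omega), ← add_assoc, pow_succ]
    push_cast
    linarith

end AlmostNormAdditive

variable [NormedSpace ℝ X]

def IsNormingSet (V : Set X) : Prop :=
  ∀ f : X →L[ℝ] ℝ, ‖f‖ = sSup ((fun x => f x) '' V)

theorem IsNormingSet.exists_lt_apply [Nontrivial X] {V : Set X} (hV : IsNormingSet V)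
    (f : StrongDual ℝ X) {r : ℝ} (hr : r < ‖f‖) : ∃ v ∈ V, r < f v := by
  have hne : V.Nonempty := by
    by_contra hVe
    obtain ⟨g, hg, -⟩ := exists_dual_vector' ℝ (0 : X)
    have := hV g
    rw [Set.not_nonempty_iff_eq_empty.1 hVe, Set.image_empty, Real.sSup_empty, hg] at this
    exact one_ne_zero this
  rw [hV f] at hr
  obtain ⟨_, ⟨v, hv, rfl⟩, hlt⟩ := exists_lt_of_lt_csSup (hne.image _) hr
  exact ⟨v, hv, hlt⟩

def IsOctahedralSeq (v : ℕ → X) : Prop :=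
  ∀ u : StrongDual ℝ (StrongDual ℝ X), ‖u‖ ≤ 1 →
    MapClusterPt (StrongDual.toWeakDual u) atTop
      (fun n => StrongDual.toWeakDual (NormedSpace.inclusionInDoubleDual ℝ X (v n))) →
    ∀ x : X, ‖NormedSpace.inclusionInDoubleDual ℝ X x + u‖ = ‖x‖ + 1

theorem exists_tail_functional {x : X} {v : ℕ → X} {N : ℕ} {ε : ℝ} (hv : ∀ j, ‖v j‖ ≤ 1)
    (h : ∀ m : ℕ, ‖x‖ + m - ε ≤ ‖x + ∑ j ∈ Finset.Ico N (N + m), v j‖) :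
    ∃ g : StrongDual ℝ X, ‖g‖ ≤ 1 ∧ ‖x‖ - ε ≤ g x ∧ ∀ j, N ≤ j → 1 - ε ≤ g (v j) := by
  choose g hg1 hgT using fun m : ℕ => exists_dual_vector'' ℝ (x + ∑ j ∈ Finset.Ico N (N + m), v j)
  simp only [RCLike.ofReal_real_eq_id, id] at hgT
  have hle : ∀ m y, g m y ≤ ‖y‖ := fun m y =>
    (abs_le.1 (abs_apply_le_norm_of_norm_le_one (hg1 m) y)).2
  have hslack : ∀ m, (‖x‖ - g m x) + ∑ j ∈ Finset.Ico N (N + m), (1 - g m (v j)) ≤ ε := by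
    intro m
    have := h m
    rw [← hgT m, map_add, map_sum] at this
    simp only [Finset.sum_sub_distrib, Finset.sum_const, Nat.card_Ico, add_tsub_cancel_left,
      nsmul_eq_mul, mul_one]
    linarith
  have hnonneg : ∀ m, 0 ≤ ∑ j ∈ Finset.Ico N (N + m), (1 - g m (v j)) := fun m =>
    Finset.sum_nonneg fun j _ => sub_nonneg.2 ((hle m _).trans (hv j))
  have hx : ∀ m, ‖x‖ - ε ≤ g m x := fun m => by linarith [hslack m, hnonneg m]
  have hvj : ∀ m j, j ∈ Finset.Ico N (N + m) → 1 - ε ≤ g m (v j) := fun m j hj => by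
    have := Finset.single_le_sum (f := fun j => 1 - g m (v j))
      (fun j _ => sub_nonneg.2 ((hle m _).trans (hv j))) hj
    linarith [hslack m, hle m x]
  obtain ⟨G, hG1, hG⟩ := exists_mapClusterPt_toWeakDual (l := atTop) g hg1
  refine ⟨G, hG1, ?_, fun j hj => ?_⟩
  · exact (isClosed_le continuous_const (WeakDual.eval_continuous x)).mem_of_mapClusterPt hG
      (Eventually.of_forall hx)
  · exact (isClosed_le continuous_const (WeakDual.eval_continuous (v j))).mem_of_mapClusterPt hG
      (eventually_atTop.2 ⟨j + 1, fun m hm => hvj m j (Finset.mem_Ico.2 ⟨hj, by omega⟩)⟩)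

theorem isOctahedralSeq_of_exists_functional {v : ℕ → X}
    (h : ∀ x : X, ∀ ε > 0, ∃ g : StrongDual ℝ X, ‖g‖ ≤ 1 ∧ ‖x‖ - ε ≤ g x ∧
      ∀ᶠ n in atTop, 1 - ε ≤ g (v n)) :
    IsOctahedralSeq v := by
  intro u hu hcl x
  refine le_antisymm ((norm_add_le (NormedSpace.inclusionInDoubleDual ℝ X x) u).trans
    (add_le_add (NormedSpace.double_dual_bound ℝ X x) hu)) (le_of_forall_pos_lt_add fun ε hε => ?_)
  obtain ⟨g, hg1, hgx, hgv⟩ := h x (ε / 3) (by positivity)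
  have hug : 1 - ε / 3 ≤ u g :=
    (isClosed_le continuous_const (WeakDual.eval_continuous g)).mem_of_mapClusterPt hcl hgv
  have hnorm : (NormedSpace.inclusionInDoubleDual ℝ X x + u) g ≤
      ‖NormedSpace.inclusionInDoubleDual ℝ X x + u‖ :=
    (le_abs_self _).trans
      (by simpa using (NormedSpace.inclusionInDoubleDual ℝ X x + u).le_opNorm_of_le hg1)
  rw [_root_.add_apply, NormedSpace.dual_def] at hnorm
  linarith

theorem IsOctahedralSeq.almostNormAdditive {v : ℕ → X} (hv : IsOctahedralSeq v)
    (hv1 : ∀ n, ‖v n‖ ≤ 1) : AlmostNormAdditive (Set.range v) := by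
  intro F δ hδ
  obtain ⟨u, hu1, hcl⟩ := exists_mapClusterPt_toWeakDual (l := atTop)
    (fun n => NormedSpace.inclusionInDoubleDual ℝ X (v n))
    fun n => (NormedSpace.double_dual_bound ℝ X (v n)).trans (hv1 n)
  have hf : ∀ e : X, ∃ f : StrongDual ℝ X, ‖f‖ ≤ 1 ∧ ‖e‖ + 1 - δ / 2 < f e + u f := by
    intro e
    obtain ⟨f, hf1, hf⟩ := exists_norm_le_one_lt_apply
      (NormedSpace.inclusionInDoubleDual ℝ X e + u) (r := ‖e‖ + 1 - δ / 2)
      (by rw [hv u hu1 hcl e]; linarith)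
    exact ⟨f, hf1, by simpa using hf⟩
  choose f hf1 hfe using hf
  have hnear : ∀ᶠ w in 𝓝 (StrongDual.toWeakDual u), ∀ e ∈ F, u (f e) - δ / 2 < w (f e) :=
    (eventually_all_finset F).2 fun e _ => continuousAt_const.eventually_lt
      (WeakDual.eval_continuous (f e)).continuousAt (by show _ < u (f e); linarith)
  obtain ⟨n, hn⟩ := (hcl.frequently hnear).exists
  refine ⟨v n, Set.mem_range_self n, fun e he => ?_⟩
  have h1 : u (f e) - δ / 2 < f e (v n) := hn e he
  have h2 := (abs_le.1 (abs_apply_le_norm_of_norm_le_one (hf1 e) (e + v n))).2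
  rw [map_add] at h2
  linarith [hfe e]

namespace AlmostNormAdditive

variable {V W : Set X}

theorem of_forall_norm_le_one (hV1 : ∀ v ∈ V, ‖v‖ ≤ 1)
    (h : ∀ F : Finset X, (∀ e ∈ F, ‖e‖ ≤ 1) → ∀ δ : ℝ, 0 < δ →
      ∃ v ∈ V, ∀ e ∈ F, ‖e‖ + 1 - δ ≤ ‖e + v‖) :
    AlmostNormAdditive V := by
  classical
  intro F δ hδ
  have hsum : 0 ≤ ∑ e ∈ F, ‖e‖ := Finset.sum_nonneg fun e _ => norm_nonneg e
  set t : ℝ := (1 + ∑ e ∈ F, ‖e‖)⁻¹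
  have ht : 0 < t := by positivity
  have ht1 : t ≤ 1 := inv_le_one_of_one_le₀ (by linarith)
  have htF : ∀ e ∈ F, ‖t • e‖ ≤ 1 := by
    intro e he
    rw [norm_smul, Real.norm_of_nonneg ht.le, inv_mul_le_one₀ (by positivity)]
    linarith [Finset.single_le_sum (fun e _ => norm_nonneg e) he]
  obtain ⟨v, hvV, hv⟩ := h (F.image (t • ·)) (fun _ hx => by
    obtain ⟨e, he, rfl⟩ := Finset.mem_image.1 hx; exact htF e he) (t * δ) (by positivity)
  exact ⟨v, hvV, fun e he => le_norm_add_of_le_norm_smul_add ht ht1 (hV1 v hvV)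
    (hv _ (Finset.mem_image_of_mem _ he))⟩

theorem octahedralNorm (hV : AlmostNormAdditive V) (hV1 : ∀ v ∈ V, ‖v‖ = 1) :
    OctahedralNorm X := by
  intro E _ ε hε
  obtain ⟨v, hvV, hv⟩ := hV.exists_forall_of_isCompact
    ((isCompact_sphere (0 : E) 1).image continuous_subtype_val) hε
  have hv1 := hV1 v hvV
  have hnonneg : ∀ e ∈ E, ∀ l : ℝ, 0 ≤ l → (1 - ε) * (‖e‖ + l) ≤ ‖e + l • v‖ := by
    intro e he l hl
    rcases eq_or_ne e 0 with rfl | he0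
    · simp only [norm_zero, zero_add, norm_smul, hv1, Real.norm_of_nonneg hl, mul_one]
      nlinarith
    have hx : ‖‖e‖⁻¹ • e‖ = 1 := by
      rw [norm_smul, norm_inv, norm_norm, inv_mul_cancel₀ (norm_ne_zero_iff.2 he0)]
    have hxv : 2 - ε ≤ ‖‖e‖⁻¹ • e + v‖ := by
      have := hv _ ⟨⟨‖e‖⁻¹ • e, E.smul_mem _ he⟩, by simpa using hx, rfl⟩
      rw [hx] at this
      linarith
    have := le_norm_smul_add_smul hε.le hx.le hv1.le hxv (norm_nonneg e) hl
    rwa [smul_inv_smul₀ (norm_ne_zero_iff.2 he0)] at this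
  refine ⟨v, hv1, fun e he l => ?_⟩
  rcases le_or_gt 0 l with hl | hl
  · simpa [abs_of_nonneg hl] using hnonneg e he l hl
  · have := hnonneg (-e) (E.neg_mem he) (-l) (by linarith)
    rwa [show -e + -l • v = -(e + l • v) by module, norm_neg, norm_neg, ← abs_of_neg hl] at this

theorem of_isNormingSet (hW : AlmostNormAdditive W) (hW1 : ∀ w ∈ W, ‖w‖ ≤ 1)
    (hV : IsNormingSet V) (hV1 : ∀ v ∈ V, ‖v‖ ≤ 1) : AlmostNormAdditive V := by
  have := hW.nontrivial
  intro F δ hδ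
  set η : ℝ := δ / (2 * (F.card + 1))
  have hη : 0 < η := by positivity
  have hcard : (F.card + 1) * η = δ / 2 := by simp only [η]; field_simp
  obtain ⟨z, hzW, hz⟩ := hW F η hη
  choose f hf1 hfz using fun e : X => exists_dual_vector'' ℝ (e + z)
  simp only [RCLike.ofReal_real_eq_id, id] at hfz
  have hle : ∀ e y, f e y ≤ ‖y‖ := fun e y =>
    (abs_le.1 (abs_apply_le_norm_of_norm_le_one (hf1 e) y)).2
  set g : StrongDual ℝ X := ∑ e ∈ F, f e
  have hg : ∀ y, g y = ∑ e ∈ F, f e y := fun y => sum_apply _ _ _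
  have hgz : g z ≤ ‖g‖ :=
    (le_abs_self _).trans (by simpa using g.le_opNorm_of_le (hW1 z hzW))
  obtain ⟨v, hvV, hv⟩ := hV.exists_lt_apply g (r := g z - δ / 2) (by linarith)
  have hv1 := hV1 v hvV
  have hslack : ∑ e ∈ F, (1 - f e v) < ∑ e ∈ F, (1 - f e z) + δ / 2 := by
    simp only [Finset.sum_sub_distrib, ← hg]
    linarith
  have hdefect : ∑ e ∈ F, (1 - f e z) ≤ F.card * η := by
    have := Finset.sum_le_sum fun e (he : e ∈ F) =>
      show 1 - f e z ≤ η by linarith [hz e he, hfz e, map_add (f e) e z, hle e e, hle e z]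
    simpa using this
  refine ⟨v, hvV, fun e he => ?_⟩
  have hsingle : 1 - f e v ≤ ∑ e ∈ F, (1 - f e v) :=
    Finset.single_le_sum (f := fun e => 1 - f e v)
      (fun e _ => sub_nonneg.2 ((hle e v).trans hv1)) he
  have := hle e (e + v)
  rw [map_add] at this
  linarith [hz e he, hfz e, map_add (f e) e z, hle e z, hW1 z hzW]

theorem of_forall_cover (hV : ∀ v ∈ V, ‖v‖ = 1)
    (h : ∀ (n : ℕ) (c : Fin n → X) (r : Fin n → ℝ), (∀ i, ‖c i‖ ≤ 1) → (∀ i, 0 < r i) →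
      V ⊆ ⋃ i, closedBall (c i) (r i) → ∃ i, closedBall (0 : X) 1 ⊆ closedBall (c i) (r i)) :
    AlmostNormAdditive V := by
  obtain ⟨v₀, hv₀⟩ : V.Nonempty := by
    by_contra hVe
    obtain ⟨i, -⟩ := h 0 finZeroElim finZeroElim finZeroElim finZeroElim
      (by simp [Set.not_nonempty_iff_eq_empty.1 hVe])
    exact i.elim0
  have : Nontrivial X := nontrivial_of_ne v₀ 0 (norm_ne_zero_iff.1 (by simp [hV v₀ hv₀]))
  refine of_forall_norm_le_one (fun v hv => (hV v hv).le) fun F hF δ hδ => ?_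
  wlog hδ1 : δ < 1 generalizing δ
  · obtain ⟨v, hvV, hv⟩ := this (1 / 2) one_half_pos (by norm_num)
    exact ⟨v, hvV, fun e he => by linarith [hv e he, not_lt.1 hδ1]⟩
  let c : Fin F.card → X := fun i => -(F.equivFin.symm i : X)
  obtain ⟨v, hvV, hv⟩ : ∃ v ∈ V, ∀ i, v ∉ closedBall (c i) (1 + ‖c i‖ - δ) := by
    by_contra! hcov
    obtain ⟨i, hi⟩ := h _ c (fun i => 1 + ‖c i‖ - δ)
      (fun i => by simpa [c] using hF _ (F.equivFin.symm i).2)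
      (fun i => by linarith [norm_nonneg (c i)])
      (fun v hv => Set.mem_iUnion.2 (hcov v hv))
    exact closedBall_zero_one_not_subset (by linarith) hi
  refine ⟨v, hvV, fun e he => ?_⟩
  have := hv (F.equivFin ⟨e, he⟩)
  simp only [c, Equiv.symm_apply_apply, mem_closedBall, dist_eq_norm, sub_neg_eq_add, norm_neg,
    not_le] at this
  rw [add_comm e]
  linarith

theorem exists_isOctahedralSeq [TopologicalSpace.SeparableSpace X] (hV : AlmostNormAdditive V)
    (hV1 : ∀ v ∈ V, ‖v‖ ≤ 1) : ∃ v : ℕ → X, (∀ n, v n ∈ V) ∧ IsOctahedralSeq v := by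
  obtain ⟨d, hd⟩ := TopologicalSpace.exists_dense_seq X
  obtain ⟨v, hvV, hv⟩ := hV.exists_seq_norm_add_sum_ge d
  refine ⟨v, hvV, isOctahedralSeq_of_exists_functional fun x ε hε => ?_⟩
  obtain ⟨k, hk⟩ := hd.exists_dist_lt x (show 0 < ε / 3 by positivity)
  obtain ⟨N, hN⟩ :=
    exists_pow_lt_of_lt_one (show 0 < ε / 3 by positivity) (one_half_lt_one (α := ℝ))
  set i := max k N
  have hpow : (1 / 2 : ℝ) ^ i ≤ (1 / 2) ^ N :=
    pow_le_pow_of_le_one (by norm_num) (by norm_num) (le_max_right k N)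
  obtain ⟨g, hg1, hgd, hgv⟩ :=
    exists_tail_functional (fun j => hV1 _ (hvV j)) (hv k i · (le_max_left k N))
  refine ⟨g, hg1, ?_, eventually_atTop.2 ⟨i, fun n hn => by linarith [hgv n hn]⟩⟩
  have h1 := (abs_le.1 (abs_apply_le_norm_of_norm_le_one hg1 (x - d k))).1
  have h2 := norm_sub_norm_le x (d k)
  rw [map_sub] at h1
  rw [dist_eq_norm] at hk
  linarith

end AlmostNormAdditive

theorem OctahedralNorm.almostNormAdditive_sphere (h : OctahedralNorm X) :
    AlmostNormAdditive (sphere (0 : X) 1) := by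
  refine AlmostNormAdditive.of_forall_norm_le_one (fun v hv => (mem_sphere_zero_iff_norm.1 hv).le)
    fun F hF δ hδ => ?_
  obtain ⟨z, hz, hzF⟩ := h (Submodule.span ℝ F) inferInstance (δ / 2) (by positivity)
  refine ⟨z, mem_sphere_zero_iff_norm.2 hz, fun e he => ?_⟩
  have := hzF e (Submodule.subset_span he) 1
  rw [abs_one, one_smul] at this
  nlinarith [mul_nonneg hδ.le (sub_nonneg.2 (hF e he))]

end Octahedral

theorem stmt_1_general (X : Type*) [NormedAddCommGroup X] [NormedSpace ℝ X]
    [TopologicalSpace.SeparableSpace X]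
    (V : Set X) (hVsphere : ∀ x ∈ V, ‖x‖ = 1)
    (hVnorming : ∀ f : X →L[ℝ] ℝ, ‖f‖ = sSup ((fun x => f x) '' V)) :
    ((∃ v : ℕ → X, (∀ n, v n ∈ V) ∧
        ∀ u : StrongDual ℝ (StrongDual ℝ X), ‖u‖ ≤ 1 →
          MapClusterPt (StrongDual.toWeakDual u) atTop
            (fun n => StrongDual.toWeakDual
              (NormedSpace.inclusionInDoubleDual ℝ X (v n))) →
          ∀ x : X, ‖NormedSpace.inclusionInDoubleDual ℝ X x + u‖ = ‖x‖ + 1)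
      ↔ OctahedralNorm X) ∧
    (OctahedralNorm X ↔
      ∀ (n : ℕ) (c : Fin n → X) (r : Fin n → ℝ),
        (∀ i, ‖c i‖ ≤ 1) → (∀ i, 0 < r i) →
        (V ⊆ ⋃ i, closedBall (c i) (r i)) →
        ∃ i, closedBall (0 : X) 1 ⊆ closedBall (c i) (r i)) := by
  have hV1 : ∀ v ∈ V, ‖v‖ ≤ 1 := fun v hv => (hVsphere v hv).le
  have of_octahedral : OctahedralNorm X → AlmostNormAdditive V := fun h =>
    h.almostNormAdditive_sphere.of_isNormingSet
      (fun w hw => (mem_sphere_zero_iff_norm.1 hw).le) hVnorming hV1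
  refine ⟨⟨fun ⟨v, hvV, hv⟩ => ?_, fun h => (of_octahedral h).exists_isOctahedralSeq hV1⟩,
    ⟨fun h n c r _ _ => (of_octahedral h).exists_closedBall_subset c r,
      fun h => (AlmostNormAdditive.of_forall_cover hVsphere h).octahedralNorm hVsphere⟩⟩
  exact ((IsOctahedralSeq.almostNormAdditive hv fun n => hV1 _ (hvV n)).mono
    (Set.range_subset_iff.2 hvV)).octahedralNorm hVsphere

/-- characterisations of octahedrality via a norming subset of the sphere. -/
theorem stmt_1 (X : Type*) [NormedAddCommGroup X] [NormedSpace ℝ X] [CompleteSpace X]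
    [TopologicalSpace.SeparableSpace X]
    (V : Set X) (hVsphere : ∀ x ∈ V, ‖x‖ = 1)
    (hVnorming : ∀ f : X →L[ℝ] ℝ, ‖f‖ = sSup ((fun x => f x) '' V)) :
    ((∃ v : ℕ → X, (∀ n, v n ∈ V) ∧
        ∀ u : StrongDual ℝ (StrongDual ℝ X), ‖u‖ ≤ 1 →
          MapClusterPt (StrongDual.toWeakDual u) atTop
            (fun n => StrongDual.toWeakDual
              (NormedSpace.inclusionInDoubleDual ℝ X (v n))) →
          ∀ x : X, ‖NormedSpace.inclusionInDoubleDual ℝ X x + u‖ = ‖x‖ + 1)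
      ↔ OctahedralNorm X) ∧
    (OctahedralNorm X ↔
      ∀ (n : ℕ) (c : Fin n → X) (r : Fin n → ℝ),
        (∀ i, ‖c i‖ ≤ 1) → (∀ i, 0 < r i) →
        (V ⊆ ⋃ i, closedBall (c i) (r i)) →
        ∃ i, closedBall (0 : X) 1 ⊆ closedBall (c i) (r i)) :=
  stmt_1_general X V hVsphere hVnorming
end

section
/- Let X be a real Banach space, Y a finite-dimensional real Hilbert space, and let v ∈ X** with ‖v‖ = 1 and z ∈ Y with ‖z‖ = 1 be such that ‖w + v ⊗ z‖ = 1 + ‖w‖ holds for every w ∈ X ⊗_π Y, the norm of w + v ⊗ z being the projective norm in X** ⊗_π Y. Then for every y ∈ Y with ‖y‖ = 1 the equality ‖w + v ⊗ y‖ = 1 + ‖w‖ holds for every w ∈ X ⊗_π Y; consequently ‖w + v ⊗ y‖ = ‖w‖ + ‖y‖ for every w ∈ X ⊗_π Y and every y ∈ Y. -/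
open scoped TensorProduct
open NormedSpace

/-- The projective norm of an element of the algebraic tensor product of two normed
spaces: the infimum of `Σ ‖eᵢ‖ ‖fᵢ‖` over all finite representations `u = Σ eᵢ ⊗ fᵢ`. -/
noncomputable def projNorm (E F : Type*) [NormedAddCommGroup E] [NormedAddCommGroup F]
    [NormedSpace ℝ E] [NormedSpace ℝ F] (u : E ⊗[ℝ] F) : ℝ :=
  sInf {s : ℝ | ∃ (n : ℕ) (e : Fin n → E) (f : Fin n → F),
    u = ∑ i, e i ⊗ₜ[ℝ] f i ∧ s = ∑ i, ‖e i‖ * ‖f i‖}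

/-!
The reflection of `Y` exchanging two unit vectors `z` and `y` is a linear isometry; tensoring with
it preserves projective norms and commutes with the embedding of `X ⊗ Y` into `X** ⊗ Y`, so the
hypothesis at `z` transports to `y`. Homogeneity of the projective norm then covers every `y ≠ 0`.
For `y = 0`, the hypothesis and the triangle inequality show that `X ⊗_π Y → X** ⊗_π Y` preserves
the projective norm.
-/

open scoped Pointwise

section ProjectiveNorm

variable {E F E' F' : Type*} [NormedAddCommGroup E] [NormedAddCommGroup F]
  [NormedAddCommGroup E'] [NormedAddCommGroup F']
  [NormedSpace ℝ E] [NormedSpace ℝ F] [NormedSpace ℝ E'] [NormedSpace ℝ F']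

def projNormSet (u : E ⊗[ℝ] F) : Set ℝ :=
  {s : ℝ | ∃ (n : ℕ) (e : Fin n → E) (f : Fin n → F),
    u = ∑ i, e i ⊗ₜ[ℝ] f i ∧ s = ∑ i, ‖e i‖ * ‖f i‖}

lemma projNorm_eq_sInf (u : E ⊗[ℝ] F) : projNorm E F u = sInf (projNormSet u) := rfl

lemma projNormSet_nonempty (u : E ⊗[ℝ] F) : (projNormSet u).Nonempty := by
  obtain ⟨n, e, f, hu⟩ := TensorProduct.exists_sum_tmul_eq u
  exact ⟨_, n, e, f, hu, rfl⟩

lemma projNormSet_bddBelow (u : E ⊗[ℝ] F) : BddBelow (projNormSet u) := by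
  refine ⟨0, ?_⟩
  rintro _ ⟨n, e, f, -, rfl⟩
  exact Finset.sum_nonneg fun i _ => by positivity

lemma projNorm_le_sum {u : E ⊗[ℝ] F} {n : ℕ} {e : Fin n → E} {f : Fin n → F}
    (hu : u = ∑ i, e i ⊗ₜ[ℝ] f i) : projNorm E F u ≤ ∑ i, ‖e i‖ * ‖f i‖ :=
  csInf_le (projNormSet_bddBelow u) ⟨n, e, f, hu, rfl⟩

lemma le_projNorm {u : E ⊗[ℝ] F} {a : ℝ}
    (h : ∀ (n : ℕ) (e : Fin n → E) (f : Fin n → F),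
      u = ∑ i, e i ⊗ₜ[ℝ] f i → a ≤ ∑ i, ‖e i‖ * ‖f i‖) : a ≤ projNorm E F u :=
  le_csInf (projNormSet_nonempty u) (by rintro _ ⟨n, e, f, hu, rfl⟩; exact h n e f hu)

lemma projNorm_nonneg (u : E ⊗[ℝ] F) : 0 ≤ projNorm E F u :=
  le_projNorm fun _ _ _ _ => Finset.sum_nonneg fun _ _ => by positivity

lemma projNorm_tmul_le (x : E) (y : F) : projNorm E F (x ⊗ₜ[ℝ] y) ≤ ‖x‖ * ‖y‖ := by
  simpa using projNorm_le_sum (e := ![x]) (f := ![y]) (by simp)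

lemma projNorm_add_le (u w : E ⊗[ℝ] F) :
    projNorm E F (u + w) ≤ projNorm E F u + projNorm E F w := by
  have hsub : projNormSet u + projNormSet w ⊆ projNormSet (u + w) := by
    rintro _ ⟨_, ⟨n, e, f, rfl, rfl⟩, _, ⟨m, e', f', rfl, rfl⟩, rfl⟩
    exact ⟨n + m, Fin.append e e', Fin.append f f', by simp [Fin.sum_univ_add],
      by simp [Fin.sum_univ_add]⟩
  rw [projNorm_eq_sInf, projNorm_eq_sInf, projNorm_eq_sInf,
    ← csInf_add (projNormSet_nonempty u) (projNormSet_bddBelow u)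
      (projNormSet_nonempty w) (projNormSet_bddBelow w)]
  exact csInf_le_csInf (projNormSet_bddBelow _)
    ((projNormSet_nonempty u).add (projNormSet_nonempty w)) hsub

lemma projNorm_smul_le (c : ℝ) (u : E ⊗[ℝ] F) :
    projNorm E F (c • u) ≤ |c| * projNorm E F u := by
  have hsub : |c| • projNormSet u ⊆ projNormSet (c • u) := by
    rintro _ ⟨_, ⟨n, e, f, rfl, rfl⟩, rfl⟩
    refine ⟨n, fun i => c • e i, f, by simp [Finset.smul_sum, TensorProduct.smul_tmul'], ?_⟩
    simp [Finset.mul_sum, norm_smul, mul_assoc]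
  rw [projNorm_eq_sInf, projNorm_eq_sInf, ← smul_eq_mul,
    ← Real.sInf_smul_of_nonneg (abs_nonneg c)]
  exact csInf_le_csInf (projNormSet_bddBelow _) ((projNormSet_nonempty u).smul_set) hsub

lemma projNorm_smul (c : ℝ) (u : E ⊗[ℝ] F) :
    projNorm E F (c • u) = |c| * projNorm E F u := by
  refine le_antisymm (projNorm_smul_le c u) ?_
  rcases eq_or_ne c 0 with rfl | hc
  · simpa using projNorm_nonneg (0 : E ⊗[ℝ] F)
  calc |c| * projNorm E F u = |c| * projNorm E F (c⁻¹ • c • u) := by rw [inv_smul_smul₀ hc]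
    _ ≤ |c| * (|c⁻¹| * projNorm E F (c • u)) := by gcongr; exact projNorm_smul_le _ _
    _ = projNorm E F (c • u) := by rw [abs_inv]; field_simp

lemma projNorm_map_le (f : E →ₗ[ℝ] E') (g : F →ₗ[ℝ] F')
    (hf : ∀ x, ‖f x‖ ≤ ‖x‖) (hg : ∀ y, ‖g y‖ ≤ ‖y‖) (u : E ⊗[ℝ] F) :
    projNorm E' F' (TensorProduct.map f g u) ≤ projNorm E F u := by
  refine le_projNorm fun n e e' hu => ?_
  calc projNorm E' F' (TensorProduct.map f g u)
      ≤ ∑ i, ‖f (e i)‖ * ‖g (e' i)‖ := projNorm_le_sum (by simp [hu])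
    _ ≤ ∑ i, ‖e i‖ * ‖e' i‖ := by gcongr with i; exacts [hf _, hg _]

lemma projNorm_lTensor_linearIsometryEquiv (U : F ≃ₗᵢ[ℝ] F') (u : E ⊗[ℝ] F) :
    projNorm E F' (U.toLinearMap.lTensor E u) = projNorm E F u := by
  refine le_antisymm (projNorm_map_le _ _ (fun _ => le_rfl) (fun y => (U.norm_map y).le) u) ?_
  calc projNorm E F u
      = projNorm E F (U.symm.toLinearMap.lTensor E (U.toLinearMap.lTensor E u)) := by
        rw [← LinearMap.comp_apply, ← LinearMap.lTensor_comp]; simp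
    _ ≤ _ := projNorm_map_le _ _ (fun _ => le_rfl) (fun y => (U.symm.norm_map y).le) _

end ProjectiveNorm

section NormingTensor

variable {E E' F : Type*} [NormedAddCommGroup E] [NormedAddCommGroup E'] [NormedAddCommGroup F]
  [NormedSpace ℝ E] [NormedSpace ℝ E'] [NormedSpace ℝ F]
  {j : E →ₗ[ℝ] E'} {v : E'} {z : F}

lemma projNorm_map_add_tmul_linearIsometryEquiv {c : ℝ}
    (h : ∀ w : E ⊗[ℝ] F,
      projNorm E' F (TensorProduct.map j LinearMap.id w + v ⊗ₜ[ℝ] z) = c + projNorm E F w)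
    (U : F ≃ₗᵢ[ℝ] F) (w : E ⊗[ℝ] F) :
    projNorm E' F (TensorProduct.map j LinearMap.id w + v ⊗ₜ[ℝ] U z) = c + projNorm E F w := by
  have hU : TensorProduct.map j LinearMap.id w + v ⊗ₜ[ℝ] U z = U.toLinearMap.lTensor E'
      (TensorProduct.map j LinearMap.id (U.symm.toLinearMap.lTensor E w) + v ⊗ₜ[ℝ] z) := by
    rw [map_add, LinearMap.lTensor_tmul]
    congr 1
    rw [← LinearMap.comp_apply, ← LinearMap.comp_apply]
    simp only [LinearMap.lTensor, ← TensorProduct.map_comp]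
    congr 2
    ext y
    simp
  rw [hU, projNorm_lTensor_linearIsometryEquiv, h, projNorm_lTensor_linearIsometryEquiv]

lemma projNorm_map_add_tmul_smul
    (h : ∀ w : E ⊗[ℝ] F,
      projNorm E' F (TensorProduct.map j LinearMap.id w + v ⊗ₜ[ℝ] z) = 1 + projNorm E F w)
    {t : ℝ} (ht : 0 < t) (w : E ⊗[ℝ] F) :
    projNorm E' F (TensorProduct.map j LinearMap.id w + v ⊗ₜ[ℝ] (t • z))
      = projNorm E F w + t := by
  have hsmul : TensorProduct.map j LinearMap.id w + v ⊗ₜ[ℝ] (t • z)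
      = t • (TensorProduct.map j LinearMap.id (t⁻¹ • w) + v ⊗ₜ[ℝ] z) := by
    rw [smul_add, map_smul, smul_inv_smul₀ ht.ne', TensorProduct.tmul_smul]
  rw [hsmul, projNorm_smul, h, projNorm_smul, abs_of_pos ht, abs_inv, abs_of_pos ht]
  field_simp
  ring

lemma projNorm_map_eq_of_forall_add_tmul (hj : ∀ x, ‖j x‖ ≤ ‖x‖) (hvz : ‖v‖ * ‖z‖ ≤ 1)
    (h : ∀ w : E ⊗[ℝ] F,
      projNorm E' F (TensorProduct.map j LinearMap.id w + v ⊗ₜ[ℝ] z) = 1 + projNorm E F w)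
    (w : E ⊗[ℝ] F) :
    projNorm E' F (TensorProduct.map j LinearMap.id w) = projNorm E F w := by
  refine le_antisymm (projNorm_map_le _ _ hj (fun _ => le_rfl) w) ?_
  linarith [h w, projNorm_tmul_le v z,
    projNorm_add_le (TensorProduct.map j LinearMap.id w) (v ⊗ₜ[ℝ] z)]

end NormingTensor

lemma projNorm_map_add_tmul_of_norm_eq {E E' F : Type*} [NormedAddCommGroup E]
    [NormedAddCommGroup E'] [NormedAddCommGroup F] [NormedSpace ℝ E] [NormedSpace ℝ E']
    [InnerProductSpace ℝ F] {j : E →ₗ[ℝ] E'} {v : E'} {z y : F} {c : ℝ}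
    (h : ∀ w : E ⊗[ℝ] F,
      projNorm E' F (TensorProduct.map j LinearMap.id w + v ⊗ₜ[ℝ] z) = c + projNorm E F w)
    (hzy : ‖z‖ = ‖y‖) (w : E ⊗[ℝ] F) :
    projNorm E' F (TensorProduct.map j LinearMap.id w + v ⊗ₜ[ℝ] y) = c + projNorm E F w := by
  simpa only [Submodule.reflection_sub hzy] using
    projNorm_map_add_tmul_linearIsometryEquiv h (ℝ ∙ (z - y))ᗮ.reflection w

theorem stmt_5_general (X : Type*) [NormedAddCommGroup X] [NormedSpace ℝ X]
    (Y : Type*) [NormedAddCommGroup Y] [InnerProductSpace ℝ Y]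
    (v : StrongDual ℝ (StrongDual ℝ X)) (hv1 : ‖v‖ = 1)
    (z : Y) (hz : ‖z‖ = 1)
    (hvz : ∀ w : X ⊗[ℝ] Y,
      projNorm (StrongDual ℝ (StrongDual ℝ X)) Y
        (TensorProduct.map (inclusionInDoubleDual ℝ X).toLinearMap LinearMap.id w
          + v ⊗ₜ[ℝ] z)
      = 1 + projNorm X Y w) :
    (∀ y : Y, ‖y‖ = 1 →
      ∀ w : X ⊗[ℝ] Y,
        projNorm (StrongDual ℝ (StrongDual ℝ X)) Y
          (TensorProduct.map (inclusionInDoubleDual ℝ X).toLinearMap LinearMap.id w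
            + v ⊗ₜ[ℝ] y)
        = 1 + projNorm X Y w) ∧
    (∀ (y : Y) (w : X ⊗[ℝ] Y),
      projNorm (StrongDual ℝ (StrongDual ℝ X)) Y
        (TensorProduct.map (inclusionInDoubleDual ℝ X).toLinearMap LinearMap.id w
          + v ⊗ₜ[ℝ] y)
      = projNorm X Y w + ‖y‖) := by
  have hsphere := fun (y : Y) (hy : ‖y‖ = 1) =>
    projNorm_map_add_tmul_of_norm_eq hvz (hz.trans hy.symm)
  refine ⟨hsphere, fun y w => ?_⟩
  rcases eq_or_ne y 0 with rfl | hy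
  · rw [TensorProduct.tmul_zero, add_zero, norm_zero, add_zero]
    exact projNorm_map_eq_of_forall_add_tmul
      (fun x => ((inclusionInDoubleDualLi ℝ).norm_map x).le) (by rw [hv1, hz, one_mul]) hvz w
  · have hscaled := projNorm_map_add_tmul_smul
      (hsphere _ (norm_smul_inv_norm (𝕜 := ℝ) hy)) (norm_pos_iff.2 hy) w
    rwa [RCLike.ofReal_real_eq_id, id, smul_inv_smul₀ (norm_ne_zero_iff.2 hy)] at hscaled

/-- let `X` be a Banach space, `Y` a finite-dimensional real Hilbert space,
`v ∈ S_{X**}` and `z ∈ S_Y` with `‖w + v ⊗ z‖ = 1 + ‖w‖` for all `w ∈ X ⊗_π Y` (norms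
in `X** ⊗_π Y`). Then for every `y ∈ S_Y` one has `‖w + v ⊗ y‖ = 1 + ‖w‖` for all
`w ∈ X ⊗_π Y`; consequently `‖w + v ⊗ y‖ = ‖w‖ + ‖y‖` for all `w ∈ X ⊗_π Y`, `y ∈ Y`. -/
theorem stmt_5 (X : Type*) [NormedAddCommGroup X] [NormedSpace ℝ X] [CompleteSpace X]
    (Y : Type*) [NormedAddCommGroup Y] [InnerProductSpace ℝ Y] [FiniteDimensional ℝ Y]
    (v : StrongDual ℝ (StrongDual ℝ X)) (hv1 : ‖v‖ = 1)
    (z : Y) (hz : ‖z‖ = 1)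
    (hvz : ∀ w : X ⊗[ℝ] Y,
      projNorm (StrongDual ℝ (StrongDual ℝ X)) Y
        (TensorProduct.map (inclusionInDoubleDual ℝ X).toLinearMap LinearMap.id w
          + v ⊗ₜ[ℝ] z)
      = 1 + projNorm X Y w) :
    (∀ y : Y, ‖y‖ = 1 →
      ∀ w : X ⊗[ℝ] Y,
        projNorm (StrongDual ℝ (StrongDual ℝ X)) Y
          (TensorProduct.map (inclusionInDoubleDual ℝ X).toLinearMap LinearMap.id w
            + v ⊗ₜ[ℝ] y)
        = 1 + projNorm X Y w) ∧
    (∀ (y : Y) (w : X ⊗[ℝ] Y),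
      projNorm (StrongDual ℝ (StrongDual ℝ X)) Y
        (TensorProduct.map (inclusionInDoubleDual ℝ X).toLinearMap LinearMap.id w
          + v ⊗ₜ[ℝ] y)
      = projNorm X Y w + ‖y‖) :=
  stmt_5_general X Y v hv1 z hz hvz
end

section
/- Let Y be a nonzero finite-dimensional real Banach space which embeds isometrically into L1(μ) for some measure μ, and let X be a Banach space with an octahedral norm. Then the space L(Y, X) of bounded linear operators from Y to X, with the operator norm, has an octahedral norm. -/
/-!
The embedding into `L₁` makes the norm of `Y` almost a finite `ℓ₁`-sum of functionals:
`(1 - δ) ‖y‖ ≤ ∑ |φᵢ y| ≤ ‖y‖`. Indeed `J` is integration against an integrable `Y*`-valued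
kernel `k` (`J y = k (·) y`), and replacing `k` by a nearby simple function `H` turns
`∫ |H t y| dμ` into a finite weighted sum of the `|r y|` over the values `r` of `H`.

Given a finite-dimensional `E ⊆ L(Y, X)`, all values `S y` with `S ∈ E` lie in one
finite-dimensional `F ⊆ X`, and iterating octahedrality yields unit vectors `x₁, …, xₙ` with
`‖e + ∑ cᵢ xᵢ‖ ≥ (1 - δ) (‖e‖ + ∑ |cᵢ|)` for `e ∈ F`. For `T = ∑ φᵢ ⊗ xᵢ`, normalised, and
`S ∈ E`, the vector `(S + λ T) y = S y + ∑ λ φᵢ(y) xᵢ` (up to the normalisation) therefore has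
norm at least `(1 - δ) (‖S y‖ + |λ| (1 - δ) ‖y‖)`, which gives `‖S + λ T‖ ≥ (1 - ε) (‖S‖ + |λ|)`.
-/

open MeasureTheory

theorem OctahedralNorm.exists_unit_vectors {X : Type*} [NormedAddCommGroup X] [NormedSpace ℝ X]
    (hX : OctahedralNorm X) (n : ℕ) (F : Submodule ℝ X) [FiniteDimensional ℝ F]
    {ε : ℝ} (hε : 0 < ε) :
    ∃ x : Fin n → X, (∀ i, ‖x i‖ = 1) ∧
      ∀ e ∈ F, ∀ c : Fin n → ℝ, (1 - ε) * (‖e‖ + ∑ i, |c i|) ≤ ‖e + ∑ i, c i • x i‖ := by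
  induction n generalizing ε with
  | zero =>
    refine ⟨finZeroElim, finZeroElim, fun e _ c => ?_⟩
    simp only [Finset.univ_eq_empty, Finset.sum_empty, add_zero]
    nlinarith [norm_nonneg e]
  | succ n ih =>
    obtain ⟨x, hx1, hx⟩ := ih (half_pos hε)
    have := FiniteDimensional.span_of_finite ℝ (Set.finite_range x)
    obtain ⟨z, hz1, hz⟩ := hX (F ⊔ Submodule.span ℝ (Set.range x)) inferInstance _ (half_pos hε)
    refine ⟨Fin.cons z x, Fin.cases hz1 hx1, fun e he c => ?_⟩
    have hmem : e + ∑ i, c i.succ • x i ∈ F ⊔ Submodule.span ℝ (Set.range x) :=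
      Submodule.add_mem _ (Submodule.mem_sup_left he) <| Submodule.mem_sup_right <|
        Submodule.sum_mem _ fun i _ => Submodule.smul_mem _ _ (Submodule.subset_span ⟨i, rfl⟩)
    have h₁ := hz _ hmem (c 0)
    have h₂ := hx e he (fun i : Fin n => c i.succ)
    rw [Fin.sum_univ_succ, Fin.sum_univ_succ]
    simp only [Fin.cons_zero, Fin.cons_succ]
    rw [show e + (c 0 • z + ∑ i, c i.succ • x i) = e + ∑ i, c i.succ • x i + c 0 • z by abel]
    rcases le_or_gt 2 ε with h | h
    · have : 0 ≤ ‖e‖ + (|c 0| + ∑ i : Fin n, |c i.succ|) := by positivity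
      nlinarith [norm_nonneg (e + ∑ i : Fin n, c i.succ • x i + c 0 • z)]
    · have hA : 0 ≤ ‖e‖ + ∑ i : Fin n, |c i.succ| := by positivity
      calc (1 - ε) * (‖e‖ + (|c 0| + ∑ i : Fin n, |c i.succ|))
          ≤ (1 - ε / 2) * ((1 - ε / 2) * (‖e‖ + ∑ i : Fin n, |c i.succ|) + |c 0|) := by
            nlinarith [abs_nonneg (c 0), mul_nonneg (sq_nonneg ε) hA]
        _ ≤ (1 - ε / 2) * (‖e + ∑ i : Fin n, c i.succ • x i‖ + |c 0|) := by gcongr; linarith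
        _ ≤ _ := h₁

section Normed

variable {𝕜 Y X : Type*} [NontriviallyNormedField 𝕜] [NormedAddCommGroup Y] [NormedSpace 𝕜 Y]
  [NormedAddCommGroup X] [NormedSpace 𝕜 X]

theorem Submodule.exists_finiteDimensional_apply_mem [FiniteDimensional 𝕜 Y]
    (E : Submodule 𝕜 (Y →L[𝕜] X)) [FiniteDimensional 𝕜 E] :
    ∃ F : Submodule 𝕜 X, FiniteDimensional 𝕜 F ∧ ∀ S ∈ E, ∀ y, S y ∈ F := by
  let b := Module.finBasis 𝕜 Y
  refine ⟨⨆ i, E.map (ContinuousLinearMap.apply 𝕜 X (b i) : (Y →L[𝕜] X) →ₗ[𝕜] X),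
    inferInstance, fun S hS y => ?_⟩
  rw [← b.sum_repr y, map_sum]
  exact Submodule.sum_mem _ fun i _ => by
    rw [map_smul]
    exact Submodule.smul_mem _ _ (Submodule.mem_iSup_of_mem i (Submodule.mem_map_of_mem hS))

theorem ContinuousLinearMap.mul_opNorm_add_le_opNorm [Nontrivial Y] {S R : Y →L[𝕜] X}
    {a c : ℝ} (hc : 0 < c) (h : ∀ y, c * (‖S y‖ + a * ‖y‖) ≤ ‖R y‖) :
    c * (‖S‖ + a) ≤ ‖R‖ := by
  have hbound : ∀ y, ‖S y‖ ≤ (‖R‖ / c - a) * ‖y‖ := fun y => by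
    have := (h y).trans (R.le_opNorm y)
    rw [sub_mul, div_mul_eq_mul_div, le_sub_iff_add_le, le_div_iff₀ hc]
    linarith
  obtain ⟨y, hy⟩ := exists_ne (0 : Y)
  have hM : 0 ≤ ‖R‖ / c - a :=
    nonneg_of_mul_nonneg_left ((norm_nonneg _).trans (hbound y)) (norm_pos_iff.mpr hy)
  have := S.opNorm_le_bound hM hbound
  rw [le_sub_iff_add_le, le_div_iff₀ hc] at this
  linarith

end Normed

section L1

variable {α : Type*} [MeasurableSpace α] {μ : Measure α}
  {Y : Type*} [NormedAddCommGroup Y] [NormedSpace ℝ Y]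

theorem abs_integral_norm_sub_integral_norm_le {E : Type*} [NormedAddCommGroup E] {f g : α → E}
    (hf : Integrable f μ) (hg : Integrable g μ) :
    |∫ t, ‖f t‖ ∂μ - ∫ t, ‖g t‖ ∂μ| ≤ ∫ t, ‖f t - g t‖ ∂μ := by
  calc _ = |‖hf.toL1 f‖ - ‖hg.toL1 g‖| := by
        rw [L1.norm_of_fun_eq_integral_norm, L1.norm_of_fun_eq_integral_norm]
    _ ≤ ‖hf.toL1 f - hg.toL1 g‖ := abs_norm_sub_norm_le _ _
    _ = _ := by rw [← Integrable.toL1_sub, L1.norm_of_fun_eq_integral_norm]; rfl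

theorem MeasureTheory.Integrable.exists_simpleFunc_integral_norm_sub_lt {E : Type*}
    [NormedAddCommGroup E] {f : α → E} (hf : Integrable f μ) {ε : ℝ} (hε : 0 < ε) :
    ∃ g : SimpleFunc α E, Integrable g μ ∧ ∫ t, ‖f t - g t‖ ∂μ < ε := by
  obtain ⟨g, hfg, hg⟩ := (memLp_one_iff_integrable.2 hf).exists_simpleFunc_eLpNorm_sub_lt
    ENNReal.one_ne_top (ENNReal.ofReal_pos.2 hε).ne'
  refine ⟨g, memLp_one_iff_integrable.1 hg, ?_⟩
  rw [eLpNorm_one_eq_lintegral_enorm] at hfg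
  change ∫ t, ‖(f - ⇑g) t‖ ∂μ < ε
  rw [integral_norm_eq_lintegral_enorm (hf.sub (memLp_one_iff_integrable.1 hg)).1]
  exact ENNReal.toReal_lt_of_lt_ofReal hfg

noncomputable def MeasureTheory.Integrable.evalL1 {k : α → StrongDual ℝ Y}
    (hk : Integrable k μ) : Y →ₗ[ℝ] Lp ℝ 1 μ where
  toFun y := ((ContinuousLinearMap.apply ℝ ℝ y).integrable_comp hk).toL1 _
  map_add' y y' := by
    simp only [ContinuousLinearMap.apply_apply, map_add]
    exact Integrable.toL1_add _ _ _ _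
  map_smul' c y := by
    simp only [ContinuousLinearMap.apply_apply, map_smul, RingHom.id_apply]
    exact Integrable.toL1_smul _ _ c

theorem MeasureTheory.Integrable.norm_evalL1 {k : α → StrongDual ℝ Y} (hk : Integrable k μ)
    (y : Y) : ‖hk.evalL1 y‖ = ∫ t, |k t y| ∂μ :=
  L1.norm_of_fun_eq_integral_norm ((ContinuousLinearMap.apply ℝ ℝ y).integrable_comp hk)

theorem LinearIsometry.exists_integrable_evalL1_eq [FiniteDimensional ℝ Y]
    (J : Y →ₗᵢ[ℝ] Lp ℝ 1 μ) :
    ∃ (k : α → StrongDual ℝ Y) (hk : Integrable k μ), hk.evalL1 = J.toLinearMap := by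
  let b := Module.finBasis ℝ Y
  let co i : StrongDual ℝ Y := LinearMap.toContinuousLinearMap (b.coord i)
  have hk : Integrable (fun t => ∑ i, (J (b i) : α → ℝ) t • co i) μ :=
    integrable_finsetSum (f := fun i t => (J (b i) : α → ℝ) t • co i) _
      fun i _ => (L1.integrable_coeFn (J (b i))).smul_const (co i)
  refine ⟨_, hk, b.ext fun i => ?_⟩
  have hki : (fun t => (∑ j, (J (b j) : α → ℝ) t • co j) (b i)) = J (b i) := by
    funext t
    simp [co, b.coord_apply, Finsupp.single_apply]
  calc hk.evalL1 (b i) = Integrable.toL1 _ (L1.integrable_coeFn (J (b i))) :=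
        (Integrable.toL1_eq_toL1_iff _ _
          ((ContinuousLinearMap.apply ℝ ℝ (b i)).integrable_comp hk) _).2 (.of_eq hki)
    _ = J (b i) := Integrable.toL1_coeFn _ _

theorem MeasureTheory.SimpleFunc.integral_abs_apply (H : SimpleFunc α (StrongDual ℝ Y))
    (hH : Integrable H μ) (y : Y) :
    ∫ t, |H t y| ∂μ = ∑ r ∈ H.range, μ.real (H ⁻¹' {r}) * |r y| := by
  have h := H.map_integral (fun r => |r y|) hH (by simp)
  rw [SimpleFunc.integral_eq_integral _
    ((ContinuousLinearMap.apply ℝ ℝ y).integrable_comp hH).abs] at h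
  simpa only [smul_eq_mul, SimpleFunc.map_apply] using h

theorem LinearIsometry.exists_simpleFunc_integral_abs_apply_near_norm [FiniteDimensional ℝ Y]
    (J : Y →ₗᵢ[ℝ] Lp ℝ 1 μ) {δ : ℝ} (hδ : 0 < δ) :
    ∃ H : SimpleFunc α (StrongDual ℝ Y), Integrable H μ ∧
      ∀ y, |∫ t, |H t y| ∂μ - ‖y‖| ≤ δ * ‖y‖ := by
  obtain ⟨k, hk, hkJ⟩ := J.exists_integrable_evalL1_eq
  obtain ⟨H, hH, hkH⟩ := hk.exists_simpleFunc_integral_norm_sub_lt hδ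
  refine ⟨H, hH, fun y => ?_⟩
  have hy : ‖y‖ = ∫ t, |k t y| ∂μ := by
    rw [← hk.norm_evalL1, hkJ]
    exact (J.norm_map y).symm
  calc |∫ t, |H t y| ∂μ - ‖y‖| = |∫ t, ‖H t y‖ ∂μ - ∫ t, ‖k t y‖ ∂μ| := by rw [hy]; rfl
    _ ≤ ∫ t, ‖H t y - k t y‖ ∂μ :=
        abs_integral_norm_sub_integral_norm_le
          ((ContinuousLinearMap.apply ℝ ℝ y).integrable_comp hH)
          ((ContinuousLinearMap.apply ℝ ℝ y).integrable_comp hk)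
    _ ≤ ∫ t, ‖k t - H t‖ * ‖y‖ ∂μ := by
        refine integral_mono_of_nonneg (ae_of_all _ fun t => norm_nonneg _)
          ((hk.sub hH).norm.mul_const _) (ae_of_all _ fun t => ?_)
        show ‖H t y - k t y‖ ≤ ‖k t - H t‖ * ‖y‖
        rw [norm_sub_rev (k t)]
        exact (H t - k t).le_opNorm y
    _ = (∫ t, ‖k t - H t‖ ∂μ) * ‖y‖ := integral_mul_const _ _
    _ ≤ δ * ‖y‖ := by gcongr

theorem LinearIsometry.exists_sum_abs_apply_near_norm [FiniteDimensional ℝ Y]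
    (J : Y →ₗᵢ[ℝ] Lp ℝ 1 μ) {δ : ℝ} (hδ : 0 < δ) :
    ∃ (n : ℕ) (φ : Fin n → StrongDual ℝ Y),
      ∀ y, (1 - δ) * ‖y‖ ≤ ∑ i, |φ i y| ∧ ∑ i, |φ i y| ≤ ‖y‖ := by
  obtain ⟨H, hH, hHy⟩ := J.exists_simpleFunc_integral_abs_apply_near_norm (half_pos hδ)
  let e := H.range.equivFin.symm
  let φ i : StrongDual ℝ Y := ((1 + δ / 2)⁻¹ * μ.real (H ⁻¹' {(e i : StrongDual ℝ Y)})) • e i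
  refine ⟨H.range.card, φ, fun y => ?_⟩
  have hsum : ∑ i, |φ i y| = (1 + δ / 2)⁻¹ * ∫ t, |H t y| ∂μ := by
    rw [H.integral_abs_apply hH, Finset.mul_sum, ← Finset.sum_coe_sort H.range, ← e.sum_comp]
    refine Fintype.sum_congr _ _ fun i => ?_
    rw [smul_apply, smul_eq_mul, abs_mul, abs_mul,
      abs_of_pos (by positivity), abs_of_nonneg measureReal_nonneg, mul_assoc]
  rw [hsum, le_inv_mul_iff₀ (by positivity), inv_mul_le_iff₀ (by positivity)]
  have := abs_le.1 (hHy y)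
  constructor <;> nlinarith [norm_nonneg y]

end L1

section Real

variable {Y X : Type*} [NormedAddCommGroup Y] [NormedSpace ℝ Y]
  [NormedAddCommGroup X] [NormedSpace ℝ X]

theorem norm_sum_smulRight_le {n : ℕ} (φ : Fin n → StrongDual ℝ Y) {x : Fin n → X}
    (hx : ∀ i, ‖x i‖ = 1) (hφ : ∀ y, ∑ i, |φ i y| ≤ ‖y‖) :
    ‖∑ i, (φ i).smulRight (x i)‖ ≤ 1 := by
  refine ContinuousLinearMap.opNorm_le_bound _ zero_le_one fun y => ?_
  calc ‖(∑ i, (φ i).smulRight (x i)) y‖ ≤ ∑ i, ‖φ i y • x i‖ := by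
        simpa using norm_sum_le _ _
    _ = ∑ i, |φ i y| := by simp [norm_smul, hx]
    _ ≤ 1 * ‖y‖ := by simpa using hφ y

theorem OctahedralNorm.continuousLinearMap [FiniteDimensional ℝ Y] [Nontrivial Y]
    (hY : ∀ δ > 0, ∃ (n : ℕ) (φ : Fin n → StrongDual ℝ Y),
      ∀ y, (1 - δ) * ‖y‖ ≤ ∑ i, |φ i y| ∧ ∑ i, |φ i y| ≤ ‖y‖)
    (hX : OctahedralNorm X) : OctahedralNorm (Y →L[ℝ] X) := by
  intro E hE ε hε
  set δ := min ε 1 / 2 with hδ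
  have hδ0 : 0 < δ := by positivity
  have hδ1 : δ < 1 := by linarith [min_le_right ε 1]
  obtain ⟨n, φ, hφ⟩ := hY δ hδ0
  obtain ⟨F, hF, hEF⟩ := E.exists_finiteDimensional_apply_mem
  obtain ⟨x, hx1, hx⟩ := hX.exists_unit_vectors n F hδ0
  set T := ∑ i, (φ i).smulRight (x i)
  have hlow : ∀ e ∈ F, ∀ (l : ℝ) y, (1 - δ) * (‖e‖ + |l| * ∑ i, |φ i y|) ≤ ‖e + l • T y‖ := by
    intro e he l y
    simpa [T, Finset.smul_sum, smul_smul, abs_mul, Finset.mul_sum] using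
      hx e he fun i => l * φ i y
  have hT : T ≠ 0 := by
    obtain ⟨y, hy⟩ := exists_ne (0 : Y)
    intro hT0
    have := hlow 0 F.zero_mem 1 y
    simp only [hT0, norm_zero, abs_one, one_mul, zero_add, zero_apply, smul_zero] at this
    have hpos : 0 < ∑ i, |φ i y| :=
      (mul_pos (sub_pos.2 hδ1) (norm_pos_iff.mpr hy)).trans_le (hφ y).1
    exact (mul_pos (sub_pos.2 hδ1) hpos).not_ge this
  refine ⟨‖T‖⁻¹ • T, norm_smul_inv_norm hT, fun S hS l => ?_⟩
  have hTinv : 1 ≤ ‖T‖⁻¹ :=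
    (one_le_inv₀ (norm_pos_iff.mpr hT)).mpr (norm_sum_smulRight_le φ hx1 fun y => (hφ y).2)
  have key : ∀ y, (1 - δ) * (‖S y‖ + |l| * (1 - δ) * ‖y‖) ≤ ‖(S + l • ‖T‖⁻¹ • T) y‖ := by
    intro y
    have h := hlow (S y) (hEF S hS y) (l * ‖T‖⁻¹) y
    have hsum : (1 - δ) * ‖y‖ ≤ ‖T‖⁻¹ * ∑ i, |φ i y| :=
      (hφ y).1.trans (le_mul_of_one_le_left (by positivity) hTinv)
    rw [smul_smul]
    calc (1 - δ) * (‖S y‖ + |l| * (1 - δ) * ‖y‖)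
        ≤ (1 - δ) * (‖S y‖ + |l| * (‖T‖⁻¹ * ∑ i, |φ i y|)) := by
          rw [mul_assoc |l|]; gcongr
      _ = (1 - δ) * (‖S y‖ + |l * ‖T‖⁻¹| * ∑ i, |φ i y|) := by
          rw [abs_mul, abs_of_pos (inv_pos.mpr (norm_pos_iff.mpr hT)), mul_assoc]
      _ ≤ _ := h
  have h₁ : 1 - ε ≤ 1 - δ := by linarith [min_le_left ε 1]
  have h₂ : 1 - ε ≤ (1 - δ) * (1 - δ) := by nlinarith [min_le_left ε 1]
  calc (1 - ε) * (‖S‖ + |l|) ≤ (1 - δ) * (‖S‖ + |l| * (1 - δ)) := by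
        nlinarith [mul_le_mul_of_nonneg_right h₁ (norm_nonneg S),
          mul_le_mul_of_nonneg_right h₂ (abs_nonneg l)]
    _ ≤ ‖S + l • ‖T‖⁻¹ • T‖ :=
        ContinuousLinearMap.mul_opNorm_add_le_opNorm (by linarith) fun y => by
          simpa [mul_assoc] using key y

end Real

theorem stmt_10_general (Y : Type*) [NormedAddCommGroup Y] [NormedSpace ℝ Y]
    [FiniteDimensional ℝ Y] [Nontrivial Y]
    (α : Type*) [MeasurableSpace α] (μ : Measure α)
    (J : Y →ₗᵢ[ℝ] Lp ℝ 1 μ)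
    (X : Type*) [NormedAddCommGroup X] [NormedSpace ℝ X]
    (hX : OctahedralNorm X) :
    OctahedralNorm (Y →L[ℝ] X) :=
  hX.continuousLinearMap fun _ hδ => J.exists_sum_abs_apply_near_norm hδ

/-- if the nonzero finite-dimensional space `Y` embeds isometrically into
`L₁(μ)` and `X` has an octahedral norm, then `L(Y, X)` has an octahedral norm. -/
theorem stmt_10 (Y : Type*) [NormedAddCommGroup Y] [NormedSpace ℝ Y]
    [FiniteDimensional ℝ Y] [Nontrivial Y]
    (α : Type*) [MeasurableSpace α] (μ : Measure α)
    (J : Y →ₗᵢ[ℝ] Lp ℝ 1 μ)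
    (X : Type*) [NormedAddCommGroup X] [NormedSpace ℝ X] [CompleteSpace X]
    (hX : OctahedralNorm X) :
    OctahedralNorm (Y →L[ℝ] X) :=
  stmt_10_general Y α μ J X hX
end
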